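/- arXiv:1105.2417 — 2 statements merged into one kernel-verified Lean document; each statement's English description precedes it below -/
import Mathlib

section
/- Let T be a uniquely rooted tree, S a strong subtree of T, and F a non-empty finite subset of S. Then the infimum of F computed in S equals the infimum of F computed in T, i.e., ∧_S F = ∧_T F. -/
/-- A tree: a nonempty set in which the set of strict predecessors of every node is
finite and linearly ordered. -/
def IsTreeSet {α : Type*} [PartialOrder α] (T : Set α) : Prop :=
  T.Nonempty ∧ ∀ t ∈ T, {s ∈ T | s < t}.Finite ∧ IsChain (· ≤ ·) {s ∈ T | s < t}

/-- The level of a node `t` in the tree `T`: the number of its strict predecessors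
in `T`. -/
noncomputable def lvl {α : Type*} [PartialOrder α] (T : Set α) (t : α) : ℕ :=
  {s ∈ T | s < t}.ncard

/-- `t` is an immediate successor of `s` in `T`. -/
def ImmSuc {α : Type*} [PartialOrder α] (T : Set α) (s t : α) : Prop :=
  s ∈ T ∧ t ∈ T ∧ s < t ∧ ¬∃ u ∈ T, s < u ∧ u < t

/-- `T` is uniquely rooted. -/
def UniquelyRooted {α : Type*} [PartialOrder α] (T : Set α) : Prop :=
  ∃ r ∈ T, ∀ t ∈ T, r ≤ t

/-- `C` is a maximal chain of `T`. -/
def MaxChainIn {α : Type*} [PartialOrder α] (T C : Set α) : Prop :=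
  C ⊆ T ∧ IsChain (· ≤ ·) C ∧
    ∀ C', C ⊆ C' → C' ⊆ T → IsChain (· ≤ ·) C' → C' = C

/-- `T` is balanced with all maximal chains of cardinality `h`
(i.e. balanced and of height `h`). -/
def BalancedOfHeight {α : Type*} [PartialOrder α] (T : Set α) (h : ℕ) : Prop :=
  ∀ C, MaxChainIn T C → C.Finite ∧ C.ncard = h

/-- Every level of `S` is a subset of some level of `T`. -/
def LevelsAligned {α : Type*} [PartialOrder α] (T S : Set α) : Prop :=
  ∀ s ∈ S, ∀ s' ∈ S, lvl S s = lvl S s' → lvl T s = lvl T s'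

/-- For every non-maximal node `s` of `S` and every immediate successor `t` of `s`
in `T` there is a unique immediate successor `s'` of `s` in `S` with `t ≤ s'`. -/
def SuccCond {α : Type*} [PartialOrder α] (T S : Set α) : Prop :=
  ∀ s ∈ S, (∃ x ∈ S, s < x) → ∀ t, ImmSuc T s t → ∃! s', ImmSuc S s s' ∧ t ≤ s'

/-- `S` is a strong subtree of `T` of (finite) height `h`. -/
def IsStrongSubtreeFin {α : Type*} [PartialOrder α] (T S : Set α) (h : ℕ) : Prop :=
  S ⊆ T ∧ S.Nonempty ∧ UniquelyRooted S ∧ BalancedOfHeight S h ∧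
    LevelsAligned T S ∧ SuccCond T S

/-- `S` is a strong subtree of `T` of infinite height. -/
def IsStrongSubtreeInf {α : Type*} [PartialOrder α] (T S : Set α) : Prop :=
  S ⊆ T ∧ S.Nonempty ∧ UniquelyRooted S ∧ (∀ s ∈ S, ∃ x ∈ S, s < x) ∧
    LevelsAligned T S ∧ SuccCond T S

/-- `w` is the infimum of `F` in `T`: a maximal node of `T` lying below every
element of `F`. -/
def IsInfOf {α : Type*} [PartialOrder α] (T F : Set α) (w : α) : Prop :=
  w ∈ T ∧ (∀ t ∈ F, w ≤ t) ∧ ∀ u ∈ T, (∀ t ∈ F, u ≤ t) → ¬w < u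


/-!
If `w = ∧_S F` lay strictly below `v = ∧_T F`, let `t` be the immediate successor of `w` in `T`
towards `v`. The strong-subtree condition gives a unique immediate successor `s'` of `w` in `S`
above `t`. For each `f ∈ F`, the immediate successor of `w` in `S` towards `f` is comparable with
`t` (both lie below `f`), hence above it, hence equal to `s'`; so `s'` is a lower bound of `F`
in `S` strictly above `w`, which is absurd. Conversely `v < w` contradicts maximality of `v`,
and `w`, `v` are comparable since both lie below any element of `F`.
-/

section Trees

variable {α : Type*} [PartialOrder α]

lemma le_total_of_le_of_isChain {T : Set α} {a b c : α}
    (hc : IsChain (· ≤ ·) {s ∈ T | s < c}) (ha : a ∈ T) (hb : b ∈ T)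
    (hac : a ≤ c) (hbc : b ≤ c) : a ≤ b ∨ b ≤ a := by
  rcases hac.eq_or_lt with rfl | hac
  · exact Or.inr hbc
  rcases hbc.eq_or_lt with rfl | hbc
  · exact Or.inl hac.le
  exact hc.total ⟨ha, hac⟩ ⟨hb, hbc⟩

lemma exists_immSuc_le {U : Set α} {w v : α} (hw : w ∈ U) (hv : v ∈ U) (hwv : w < v)
    (hfin : {s ∈ U | s < v}.Finite) : ∃ t, ImmSuc U w t ∧ t ≤ v := by
  have hAfin : {u ∈ U | w < u ∧ u ≤ v}.Finite :=
    (hfin.insert v).subset fun u ⟨huU, _, huv⟩ => by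
      rcases huv.eq_or_lt with rfl | huv
      exacts [Set.mem_insert _ _, Or.inr ⟨huU, huv⟩]
  obtain ⟨t, htmin⟩ := hAfin.exists_minimal ⟨v, hv, hwv, le_rfl⟩
  refine ⟨t, ⟨hw, htmin.prop.1, htmin.prop.2.1, ?_⟩, htmin.prop.2.2⟩
  rintro ⟨u, huU, hwu, hut⟩
  exact htmin.not_lt ⟨huU, hwu, hut.le.trans htmin.prop.2.2⟩ hut

lemma ImmSuc.le_of_lt {T : Set α} {w t u : α} (ht : ImmSuc T w t) (hu : u ∈ T) (hwu : w < u)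
    (htotal : u ≤ t ∨ t ≤ u) : t ≤ u := by
  rcases htotal with hut | htu
  · rcases hut.eq_or_lt with rfl | hut
    exacts [le_rfl, absurd ⟨u, hu, hwu, hut⟩ ht.2.2.2]
  · exact htu

lemma subset_and_succCond_of_isStrongSubtree {T S : Set α}
    (hS : IsStrongSubtreeInf T S ∨ ∃ h, IsStrongSubtreeFin T S h) : S ⊆ T ∧ SuccCond T S := by
  rcases hS with hS | ⟨_, hS⟩
  exacts [⟨hS.1, hS.2.2.2.2.2⟩, ⟨hS.1, hS.2.2.2.2.2⟩]

section StrongSubtree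

variable {T S F : Set α} (hT : IsTreeSet T) (hST : S ⊆ T) (hsc : SuccCond T S)
  (hFS : F ⊆ S) (hFne : F.Nonempty)
include hT hST hsc hFS hFne

lemma SuccCond.exists_immSuc_lowerBound {w t : α} (hw : w ∈ S) (ht : ImmSuc T w t)
    (htF : ∀ f ∈ F, t ≤ f) : ∃ s', ImmSuc S w s' ∧ ∀ f ∈ F, s' ≤ f := by
  obtain ⟨f₀, hf₀⟩ := hFne
  obtain ⟨s', ⟨hs', hts'⟩, huniq⟩ :=
    hsc w hw ⟨f₀, hFS hf₀, ht.2.2.1.trans_le (htF f₀ hf₀)⟩ t ht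
  refine ⟨s', hs', fun f hf => ?_⟩
  have hfT : f ∈ T := hST (hFS hf)
  obtain ⟨s₁, hs₁, hs₁f⟩ := exists_immSuc_le hw (hFS hf) (ht.2.2.1.trans_le (htF f hf))
    ((hT.2 f hfT).1.subset fun s hs => ⟨hST hs.1, hs.2⟩)
  have hts₁ : t ≤ s₁ := ht.le_of_lt (hST hs₁.2.1) hs₁.2.2.1
    (le_total_of_le_of_isChain (hT.2 f hfT).2 (hST hs₁.2.1) ht.2.1 hs₁f (htF f hf))
  exact huniq s₁ ⟨hs₁, hts₁⟩ ▸ hs₁f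

lemma IsInfOf.not_lt_of_succCond {w v : α} (hw : IsInfOf S F w) (hv : IsInfOf T F v) :
    ¬w < v := by
  intro hwv
  obtain ⟨t, ht, htv⟩ := exists_immSuc_le (hST hw.1) hv.1 hwv (hT.2 v hv.1).1
  obtain ⟨s', hs', hs'F⟩ := hsc.exists_immSuc_lowerBound hT hST hFS hFne hw.1 ht
    fun f hf => htv.trans (hv.2.1 f hf)
  exact hw.2.2 s' hs'.2.1 hs'F hs'.2.2.1

end StrongSubtree

end Trees

theorem stmt7_general {α : Type*} [PartialOrder α] (T S : Set α)
    (hT : IsTreeSet T)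
    (hS : IsStrongSubtreeInf T S ∨ ∃ h, IsStrongSubtreeFin T S h)
    (F : Set α) (hFS : F ⊆ S) (hFne : F.Nonempty)
    (w v : α) (hw : IsInfOf S F w) (hv : IsInfOf T F v) : w = v := by
  obtain ⟨hST, hsc⟩ := subset_and_succCond_of_isStrongSubtree hS
  have hnot_wv : ¬w < v := hw.not_lt_of_succCond hT hST hsc hFS hFne hv
  have hnot_vw : ¬v < w := hv.2.2 w (hST hw.1) hw.2.1
  obtain ⟨f, hf⟩ := hFne
  rcases le_total_of_le_of_isChain (hT.2 f (hST (hFS hf))).2 (hST hw.1) hv.1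
    (hw.2.1 f hf) (hv.2.1 f hf) with hle | hle
  · exact hle.eq_or_lt.resolve_right hnot_wv
  · exact (hle.eq_or_lt.resolve_right hnot_vw).symm

theorem stmt7 {α : Type*} [PartialOrder α] (T S : Set α)
    (hT : IsTreeSet T) (hroot : UniquelyRooted T)
    (hS : IsStrongSubtreeInf T S ∨ ∃ h, IsStrongSubtreeFin T S h)
    (F : Set α) (hFS : F ⊆ S) (hFne : F.Nonempty) (hFfin : F.Finite)
    (w v : α) (hw : IsInfOf S F w) (hv : IsInfOf T F v) : w = v :=
  stmt7_general T S hT hS F hFS hFne w v hw hv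
end

section
/- For every integer k ≥ 1, every uniquely rooted and balanced tree T of height k, and every non-empty finite subset F of T, there exists a strong subtree S of T with height h(S) ≤ min{k, 2|F| − 1} such that F ⊆ S. -/
/-!
Let `Λ` be the set of levels of the meets `z ⊓ z'` of pairs of nodes of `F` (with `z ⊓ z = z`).
Adding one node `a` to `F` adds at most two levels, that of `a` and that of its highest meet with
an old node, so `|Λ| ≤ 2|F| - 1`; trivially `|Λ| ≤ k`. Enumerate `Λ` as `ℓ 0 < ⋯ < ℓ (n - 1)`.
The strong subtree has the common ancestor of `F` on level `ℓ 0` as root, and its level `i + 1` is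
obtained by continuing each node `s` of level `i` through each immediate successor `t` of `s` in `T`
up to level `ℓ (i + 1)`, below a node of `F` whenever `t` lies below one. This choice does not
depend on the node of `F`, because two nodes of `F` above `t` meet on a level of `Λ` above that of
`s`, hence on level `ℓ (i + 1)` or higher; so every node of `F` is reached.
-/

section

open Set

variable {α : Type*} [PartialOrder α]

theorem IsChain.exists_isGreatest {s : Set α} (hs : IsChain (· ≤ ·) s) (hfin : s.Finite)
    (hne : s.Nonempty) : ∃ m, IsGreatest s m := by
  obtain ⟨m, hm⟩ := hfin.exists_maximal hne
  refine ⟨m, hm.prop, fun x hx => ?_⟩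
  rcases eq_or_ne x m with rfl | hxm
  · exact le_rfl
  · exact (hs hx hm.prop hxm).elim id (hm.le_of_ge hx)

open Classical in
/-- Junk value `t` when `t` has no ancestor at level `j`. -/
noncomputable def ancestor (T : Set α) (t : α) (j : ℕ) : α :=
  if h : ∃ u ∈ T, u ≤ t ∧ lvl T u = j then h.choose else t

namespace IsTreeSet

variable {T : Set α}

theorem lvl_lt_lvl (hT : IsTreeSet T) {s t : α} (hs : s ∈ T) (ht : t ∈ T) (hst : s < t) :
    lvl T s < lvl T t :=
  ncard_lt_ncard ⟨fun _ hx => ⟨hx.1, hx.2.trans hst⟩, fun h => lt_irrefl s (h ⟨hs, hst⟩).2⟩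
    (hT.2 t ht).1

theorem lvl_le_lvl (hT : IsTreeSet T) {s t : α} (hs : s ∈ T) (ht : t ∈ T) (hst : s ≤ t) :
    lvl T s ≤ lvl T t := by
  rcases hst.eq_or_lt with rfl | hlt
  · exact le_rfl
  · exact (hT.lvl_lt_lvl hs ht hlt).le

theorem eq_of_le_of_lvl_le (hT : IsTreeSet T) {s t : α} (hs : s ∈ T) (ht : t ∈ T) (hst : s ≤ t)
    (hlvl : lvl T t ≤ lvl T s) : s = t :=
  hst.eq_or_lt.resolve_right fun hlt => (hT.lvl_lt_lvl hs ht hlt).not_ge hlvl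

theorem isChain_setOf_le (hT : IsTreeSet T) {t : α} (ht : t ∈ T) :
    IsChain (· ≤ ·) {x ∈ T | x ≤ t} := by
  rintro u ⟨hu, hut⟩ v ⟨hv, hvt⟩ huv
  rcases hut.eq_or_lt with rfl | hut
  · exact Or.inr hvt
  rcases hvt.eq_or_lt with rfl | hvt
  · exact Or.inl hut.le
  exact (hT.2 t ht).2 ⟨hu, hut⟩ ⟨hv, hvt⟩ huv

theorem le_total_of_le (hT : IsTreeSet T) {u v t : α} (hu : u ∈ T) (hv : v ∈ T) (ht : t ∈ T)
    (hut : u ≤ t) (hvt : v ≤ t) : u ≤ v ∨ v ≤ u := by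
  rcases eq_or_ne u v with rfl | huv
  · exact Or.inl le_rfl
  · exact hT.isChain_setOf_le ht ⟨hu, hut⟩ ⟨hv, hvt⟩ huv

theorem eq_of_lvl_eq (hT : IsTreeSet T) {u v t : α} (hu : u ∈ T) (hv : v ∈ T) (ht : t ∈ T)
    (hut : u ≤ t) (hvt : v ≤ t) (hlvl : lvl T u = lvl T v) : u = v := by
  rcases hT.le_total_of_le hu hv ht hut hvt with h | h
  · exact hT.eq_of_le_of_lvl_le hu hv h hlvl.ge
  · exact (hT.eq_of_le_of_lvl_le hv hu h hlvl.le).symm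

theorem lvl_injOn (hT : IsTreeSet T) {C : Set α} (hCT : C ⊆ T) (hC : IsChain (· ≤ ·) C) :
    InjOn (lvl T) C := by
  intro x hx y hy hxy
  rcases eq_or_ne x y with rfl | hne
  · rfl
  rcases hC hx hy hne with h | h
  · exact hT.eq_of_le_of_lvl_le (hCT hx) (hCT hy) h hxy.ge
  · exact (hT.eq_of_le_of_lvl_le (hCT hy) (hCT hx) h hxy.le).symm

theorem finite_of_isChain (hT : IsTreeSet T) {C : Set α} (hCT : C ⊆ T) (hC : IsChain (· ≤ ·) C)
    {N : ℕ} (hN : ∀ x ∈ C, lvl T x < N) : C.Finite :=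
  .of_finite_image ((finite_Iio N).subset (by rintro _ ⟨x, hx, rfl⟩; exact hN x hx))
    (hT.lvl_injOn hCT hC)

/-- The `lvl t` strict predecessors of `t` form a chain on which `lvl` is injective with values
below `lvl t`, so every such value is taken. -/
theorem image_lvl_setOf_lt (hT : IsTreeSet T) {t : α} (ht : t ∈ T) :
    lvl T '' {x ∈ T | x < t} = Iio (lvl T t) := by
  obtain ⟨hfin, hchain⟩ := hT.2 t ht
  refine eq_of_subset_of_ncard_le ?_ ?_ (finite_Iio _)
  · rintro _ ⟨x, hx, rfl⟩
    exact hT.lvl_lt_lvl hx.1 ht hx.2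
  · rw [ncard_Iio_nat, (hT.lvl_injOn (fun _ hx => hx.1) hchain).ncard_image]
    rfl

theorem exists_le_lvl_eq (hT : IsTreeSet T) {t : α} (ht : t ∈ T) {j : ℕ} (hj : j ≤ lvl T t) :
    ∃ u ∈ T, u ≤ t ∧ lvl T u = j := by
  rcases hj.eq_or_lt with rfl | hlt
  · exact ⟨t, ht, le_rfl, rfl⟩
  · obtain ⟨u, hu, rfl⟩ := (hT.image_lvl_setOf_lt ht).ge hlt
    exact ⟨u, hu.1, hu.2.le, rfl⟩

theorem ancestor_spec (hT : IsTreeSet T) {t : α} (ht : t ∈ T) {j : ℕ} (hj : j ≤ lvl T t) :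
    ancestor T t j ∈ T ∧ ancestor T t j ≤ t ∧ lvl T (ancestor T t j) = j := by
  have h := hT.exists_le_lvl_eq ht hj
  rw [ancestor, dif_pos h]
  exact h.choose_spec

theorem eq_ancestor (hT : IsTreeSet T) {t u : α} (ht : t ∈ T) (hu : u ∈ T) (hut : u ≤ t) :
    u = ancestor T t (lvl T u) := by
  obtain ⟨ha, hat, hlvl⟩ := hT.ancestor_spec ht (hT.lvl_le_lvl hu ht hut)
  exact hT.eq_of_lvl_eq hu ha ht hut hat hlvl.symm

theorem ancestor_lvl (hT : IsTreeSet T) {t : α} (ht : t ∈ T) : ancestor T t (lvl T t) = t :=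
  (hT.eq_ancestor ht ht le_rfl).symm

theorem ancestor_eq_of_le (hT : IsTreeSet T) {s t : α} (hs : s ∈ T) (ht : t ∈ T) (hst : s ≤ t)
    {j : ℕ} (hj : j ≤ lvl T s) : ancestor T s j = ancestor T t j := by
  obtain ⟨ha, has, hlvl⟩ := hT.ancestor_spec hs hj
  simpa only [hlvl] using hT.eq_ancestor ht ha (has.trans hst)

theorem ancestor_le_ancestor (hT : IsTreeSet T) {t : α} (ht : t ∈ T) {i j : ℕ} (hij : i ≤ j)
    (hj : j ≤ lvl T t) : ancestor T t i ≤ ancestor T t j := by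
  obtain ⟨hai, hait, hlvli⟩ := hT.ancestor_spec ht (hij.trans hj)
  obtain ⟨haj, hajt, hlvlj⟩ := hT.ancestor_spec ht hj
  rcases hT.le_total_of_le hai haj ht hait hajt with h | h
  · exact h
  · exact (hT.eq_of_le_of_lvl_le haj hai h (by omega)).ge

theorem ancestor_lt_ancestor (hT : IsTreeSet T) {t : α} (ht : t ∈ T) {i j : ℕ} (hij : i < j)
    (hj : j ≤ lvl T t) : ancestor T t i < ancestor T t j := by
  refine (hT.ancestor_le_ancestor ht hij.le hj).lt_of_ne fun h => hij.ne ?_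
  rw [← (hT.ancestor_spec ht (hij.le.trans hj)).2.2, h, (hT.ancestor_spec ht hj).2.2]

theorem le_ancestor (hT : IsTreeSet T) {s t : α} (hs : s ∈ T) (ht : t ∈ T) (hst : s ≤ t) {j : ℕ}
    (hsj : lvl T s ≤ j) (hj : j ≤ lvl T t) : s ≤ ancestor T t j := by
  rw [hT.eq_ancestor ht hs hst]
  exact hT.ancestor_le_ancestor ht hsj hj

theorem immSuc_iff (hT : IsTreeSet T) {s t : α} (hs : s ∈ T) (ht : t ∈ T) :
    ImmSuc T s t ↔ s < t ∧ lvl T t = lvl T s + 1 := by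
  constructor
  · rintro ⟨-, -, hst, hbetween⟩
    refine ⟨hst, le_antisymm (not_lt.mp fun hlt => hbetween ?_) (hT.lvl_lt_lvl hs ht hst)⟩
    refine ⟨ancestor T t (lvl T s + 1), (hT.ancestor_spec ht hlt.le).1, ?_, ?_⟩
    · exact (hT.eq_ancestor ht hs hst.le).trans_lt
        (hT.ancestor_lt_ancestor ht (Nat.lt_succ_self _) hlt.le)
    · simpa only [hT.ancestor_lvl ht] using hT.ancestor_lt_ancestor ht hlt le_rfl
  · rintro ⟨hst, hlvl⟩
    refine ⟨hs, ht, hst, ?_⟩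
    rintro ⟨u, hu, hsu, hut⟩
    have := hT.lvl_lt_lvl hs hu hsu
    have := hT.lvl_lt_lvl hu ht hut
    omega

end IsTreeSet

theorem exists_maxChainIn {T D : Set α} (hDT : D ⊆ T) (hD : IsChain (· ≤ ·) D) :
    ∃ C, MaxChainIn T C ∧ D ⊆ C := by
  have hub : ∀ c ⊆ {C | C ⊆ T ∧ IsChain (· ≤ ·) C}, IsChain (· ⊆ ·) c → c.Nonempty →
      ∃ ub ∈ {C | C ⊆ T ∧ IsChain (· ≤ ·) C}, ∀ s ∈ c, s ⊆ ub := by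
    refine fun c hc hchain _ => ⟨⋃₀ c, ⟨sUnion_subset fun s hs => (hc hs).1, ?_⟩,
      fun _ => subset_sUnion_of_mem⟩
    rintro x ⟨s, hs, hxs⟩ y ⟨t, ht, hyt⟩ hxy
    rcases eq_or_ne s t with rfl | hst
    · exact (hc hs).2 hxs hyt hxy
    rcases hchain hs ht hst with h | h
    · exact (hc ht).2 (h hxs) hyt hxy
    · exact (hc hs).2 hxs (h hyt) hxy
  obtain ⟨C, hDC, hC⟩ := zorn_subset_nonempty _ hub D ⟨hDT, hD⟩
  exact ⟨C, ⟨hC.prop.1, hC.prop.2, fun C' hCC' hC'T hC' =>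
    (hC.eq_of_subset ⟨hC'T, hC'⟩ hCC').symm⟩, hDC⟩

namespace MaxChainIn

variable {T C : Set α}

theorem nonempty (hC : MaxChainIn T C) (hT : T.Nonempty) : C.Nonempty := by
  obtain ⟨t, ht⟩ := hT
  rw [nonempty_iff_ne_empty]
  rintro rfl
  exact singleton_ne_empty t (hC.2.2 {t} (empty_subset _) (singleton_subset_iff.mpr ht)
    subsingleton_singleton.isChain)

theorem not_lt_of_isGreatest (hC : MaxChainIn T C) {x y : α} (hx : IsGreatest C x) (hy : y ∈ T) :
    ¬x < y := fun hxy => by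
  have hins := hC.2.2 (insert y C) (subset_insert y C) (insert_subset hy hC.1)
    (hC.2.1.insert fun b hb _ => Or.inr ((hx.2 hb).trans hxy.le))
  exact hxy.not_ge (hx.2 (hins ▸ mem_insert y C))

theorem eq_setOf_le (hC : MaxChainIn T C) (hT : IsTreeSet T) {x : α} (hx : IsGreatest C x) :
    C = {y ∈ T | y ≤ x} :=
  (hC.2.2 {y ∈ T | y ≤ x} (fun _ hy => ⟨hC.1 hy, hx.2 hy⟩) (fun _ hy => hy.1)
    (hT.isChain_setOf_le (hC.1 hx.1))).symm

end MaxChainIn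

namespace IsTreeSet

variable {T : Set α}

theorem ncard_setOf_le (hT : IsTreeSet T) {x : α} (hx : x ∈ T) :
    {y ∈ T | y ≤ x}.ncard = lvl T x + 1 := by
  have : {y ∈ T | y ≤ x} = insert x {y ∈ T | y < x} := by
    ext y
    rw [mem_insert_iff]
    constructor
    · rintro ⟨hy, hyx⟩
      exact hyx.eq_or_lt.imp id fun h => ⟨hy, h⟩
    · rintro (rfl | ⟨hy, hyx⟩)
      exacts [⟨hx, le_rfl⟩, ⟨hy, hyx.le⟩]
  rw [this, ncard_insert_of_notMem (fun h => lt_irrefl x h.2) (hT.2 x hx).1]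
  rfl

theorem mono (hT : IsTreeSet T) {S : Set α} (hST : S ⊆ T) (hS : S.Nonempty) : IsTreeSet S := by
  refine ⟨hS, fun s hs => ⟨(hT.2 s (hST hs)).1.subset ?_, (hT.2 s (hST hs)).2.mono ?_⟩⟩ <;>
    exact fun x hx => ⟨hST hx.1, hx.2⟩

theorem balancedOfHeight (hT : IsTreeSet T) {n : ℕ} (hlt : ∀ x ∈ T, lvl T x < n)
    (hmax : ∀ x ∈ T, (∀ y ∈ T, ¬x < y) → lvl T x + 1 = n) : BalancedOfHeight T n := by
  intro C hC
  have hfin := hT.finite_of_isChain hC.1 hC.2.1 fun x hx => hlt x (hC.1 hx)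
  obtain ⟨x, hx⟩ := hC.2.1.exists_isGreatest hfin (hC.nonempty hT.1)
  refine ⟨hfin, ?_⟩
  rw [hC.eq_setOf_le hT hx, hT.ncard_setOf_le (hC.1 hx.1)]
  exact hmax x (hC.1 hx.1) fun y hy => hC.not_lt_of_isGreatest hx hy

theorem exists_le_lvl_eq_of_balanced (hT : IsTreeSet T) {k : ℕ} (hbal : BalancedOfHeight T k)
    {t : α} (ht : t ∈ T) : ∃ x ∈ T, t ≤ x ∧ lvl T x + 1 = k := by
  obtain ⟨C, hC, htC⟩ :=
    exists_maxChainIn (singleton_subset_iff.mpr ht) subsingleton_singleton.isChain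
  obtain ⟨hfin, hcard⟩ := hbal C hC
  obtain ⟨x, hx⟩ := hC.2.1.exists_isGreatest hfin ⟨t, htC rfl⟩
  refine ⟨x, hC.1 hx.1, hx.2 (htC rfl), ?_⟩
  rw [← hcard, hC.eq_setOf_le hT hx, hT.ncard_setOf_le (hC.1 hx.1)]

theorem lvl_lt_of_balanced (hT : IsTreeSet T) {k : ℕ} (hbal : BalancedOfHeight T k) {t : α}
    (ht : t ∈ T) : lvl T t < k := by
  obtain ⟨x, hx, htx, hk⟩ := hT.exists_le_lvl_eq_of_balanced hbal ht
  have := hT.lvl_le_lvl ht hx htx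
  omega

theorem exists_ge_lvl_eq (hT : IsTreeSet T) {k : ℕ} (hbal : BalancedOfHeight T k) {t : α}
    (ht : t ∈ T) {j : ℕ} (htj : lvl T t ≤ j) (hj : j < k) : ∃ u ∈ T, t ≤ u ∧ lvl T u = j := by
  obtain ⟨x, hx, htx, hk⟩ := hT.exists_le_lvl_eq_of_balanced hbal ht
  have hjx : j ≤ lvl T x := by omega
  obtain ⟨hu, -, hlvl⟩ := hT.ancestor_spec hx hjx
  exact ⟨_, hu, hT.le_ancestor ht hx htx htj hjx, hlvl⟩

end IsTreeSet

open Classical in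
/-- Junk value `x` when `x` and `y` have no meet in `T`. -/
noncomputable def meet (T : Set α) (x y : α) : α :=
  if h : ∃ m, IsGreatest {z ∈ T | z ≤ x ∧ z ≤ y} m then h.choose else x

namespace IsTreeSet

variable {T : Set α}

theorem isGreatest_meet (hT : IsTreeSet T) (hroot : UniquelyRooted T) {x y : α} (hx : x ∈ T)
    (hy : y ∈ T) : IsGreatest {z ∈ T | z ≤ x ∧ z ≤ y} (meet T x y) := by
  have h : ∃ m, IsGreatest {z ∈ T | z ≤ x ∧ z ≤ y} m := by
    obtain ⟨r, hr, hrle⟩ := hroot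
    refine ((hT.isChain_setOf_le hx).mono ?_).exists_isGreatest
      ((hT.2 x hx).1.insert x |>.subset ?_) ⟨r, hr, hrle x hx, hrle y hy⟩
    · exact fun z hz => ⟨hz.1, hz.2.1⟩
    · exact fun z hz => (hz.2.1.eq_or_lt).imp id fun hlt => ⟨hz.1, hlt⟩
  rw [meet, dif_pos h]
  exact h.choose_spec

theorem meet_mem (hT : IsTreeSet T) (hroot : UniquelyRooted T) {x y : α} (hx : x ∈ T)
    (hy : y ∈ T) : meet T x y ∈ T :=
  (hT.isGreatest_meet hroot hx hy).1.1

theorem meet_le_left (hT : IsTreeSet T) (hroot : UniquelyRooted T) {x y : α} (hx : x ∈ T)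
    (hy : y ∈ T) : meet T x y ≤ x :=
  (hT.isGreatest_meet hroot hx hy).1.2.1

theorem meet_le_right (hT : IsTreeSet T) (hroot : UniquelyRooted T) {x y : α} (hx : x ∈ T)
    (hy : y ∈ T) : meet T x y ≤ y :=
  (hT.isGreatest_meet hroot hx hy).1.2.2

theorem le_meet (hT : IsTreeSet T) (hroot : UniquelyRooted T) {x y z : α} (hx : x ∈ T)
    (hy : y ∈ T) (hz : z ∈ T) (hzx : z ≤ x) (hzy : z ≤ y) : z ≤ meet T x y :=
  (hT.isGreatest_meet hroot hx hy).2 ⟨hz, hzx, hzy⟩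

theorem meet_self (hT : IsTreeSet T) (hroot : UniquelyRooted T) {x : α} (hx : x ∈ T) :
    meet T x x = x :=
  (hT.meet_le_left hroot hx hx).antisymm (hT.le_meet hroot hx hx hx le_rfl le_rfl)

theorem meet_comm (hT : IsTreeSet T) (hroot : UniquelyRooted T) {x y : α} (hx : x ∈ T)
    (hy : y ∈ T) : meet T x y = meet T y x := by
  have key : ∀ {x y}, x ∈ T → y ∈ T → meet T x y ≤ meet T y x := fun hx hy =>
    hT.le_meet hroot hy hx (hT.meet_mem hroot hx hy) (hT.meet_le_right hroot hx hy)
      (hT.meet_le_left hroot hx hy)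
  exact (key hx hy).antisymm (key hy hx)

/-- Of the three pairwise meets of `a`, `b`, `c`, the two lowest coincide. -/
theorem meet_eq_or_eq_of_lvl_le (hT : IsTreeSet T) (hroot : UniquelyRooted T) {a b c : α}
    (ha : a ∈ T) (hb : b ∈ T) (hc : c ∈ T) (hlvl : lvl T (meet T a c) ≤ lvl T (meet T a b)) :
    meet T a c = meet T a b ∨ meet T a c = meet T b c := by
  have hab := hT.meet_mem hroot ha hb
  have hac := hT.meet_mem hroot ha hc
  have hbc := hT.meet_mem hroot hb hc
  have hle : meet T a c ≤ meet T a b := by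
    rcases hT.le_total_of_le hac hab ha (hT.meet_le_left hroot ha hc)
      (hT.meet_le_left hroot ha hb) with h | h
    · exact h
    · exact (hT.eq_of_le_of_lvl_le hab hac h hlvl).ge
  rcases hle.eq_or_lt with heq | hlt
  · exact Or.inl heq
  refine Or.inr (le_antisymm ?_ ?_)
  · exact hT.le_meet hroot hb hc hac (hle.trans (hT.meet_le_right hroot ha hb))
      (hT.meet_le_right hroot ha hc)
  · rcases hT.le_total_of_le hbc hab hb (hT.meet_le_left hroot hb hc)
      (hT.meet_le_right hroot ha hb) with h | h
    · exact hT.le_meet hroot ha hc hbc (h.trans (hT.meet_le_left hroot ha hb))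
        (hT.meet_le_right hroot hb hc)
    · exact absurd (hT.le_meet hroot ha hc hab (hT.meet_le_left hroot ha hb)
        (h.trans (hT.meet_le_right hroot hb hc))) hlt.not_ge

theorem ancestor_eq_of_le_lvl_meet (hT : IsTreeSet T) (hroot : UniquelyRooted T) {z z' : α}
    (hz : z ∈ T) (hz' : z' ∈ T) {j : ℕ} (hj : j ≤ lvl T (meet T z z')) :
    ancestor T z j = ancestor T z' j :=
  (hT.ancestor_eq_of_le (hT.meet_mem hroot hz hz') hz (hT.meet_le_left hroot hz hz') hj).symm.trans
    (hT.ancestor_eq_of_le (hT.meet_mem hroot hz hz') hz' (hT.meet_le_right hroot hz hz') hj)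

theorem card_image₂_lvl_meet_le (hT : IsTreeSet T) (hroot : UniquelyRooted T) {G : Finset α}
    (hG : G.Nonempty) (hGT : ↑G ⊆ T) :
    (Finset.image₂ (fun x y => lvl T (meet T x y)) G G).card ≤ 2 * G.card - 1 := by
  classical
  induction hG using Finset.Nonempty.cons_induction with
  | singleton a => simp
  | cons a s has hs ih =>
    have ha : a ∈ T := hGT (by simp)
    have hsT : ↑s ⊆ T := fun x hx => hGT (by simp [hx])
    obtain ⟨b, hb, hbmax⟩ := s.exists_max_image (fun y => lvl T (meet T a y)) hs
    set Λ := Finset.image₂ (fun x y => lvl T (meet T x y)) s s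
    have hmem : ∀ x ∈ s, ∀ y ∈ s, lvl T (meet T x y) ∈ Λ :=
      fun x hx y hy => Finset.mem_image₂_of_mem hx hy
    have hnew : ∀ y ∈ s, lvl T (meet T a y) ∈ insert (lvl T (meet T a b)) Λ := by
      intro y hy
      rcases hT.meet_eq_or_eq_of_lvl_le hroot ha (hsT hb) (hsT hy) (hbmax y hy) with h | h <;>
        rw [h]
      · exact Finset.mem_insert_self _ _
      · exact Finset.mem_insert_of_mem (hmem b hb y hy)
    have hsub : Finset.image₂ (fun x y => lvl T (meet T x y)) (s.cons a has) (s.cons a has) ⊆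
        insert (lvl T a) (insert (lvl T (meet T a b)) Λ) := by
      simp only [Finset.subset_iff, Finset.mem_image₂, Finset.mem_cons]
      rintro _ ⟨x, rfl | hx, y, rfl | hy, rfl⟩
      · rw [hT.meet_self hroot ha]
        exact Finset.mem_insert_self _ _
      · exact Finset.mem_insert_of_mem (hnew y hy)
      · rw [hT.meet_comm hroot (hsT hx) ha]
        exact Finset.mem_insert_of_mem (hnew x hx)
      · exact Finset.mem_insert_of_mem (Finset.mem_insert_of_mem (hmem x hx y hy))
    have := (Finset.card_le_card hsub).trans
      ((Finset.card_insert_le _ _).trans (Nat.succ_le_succ (Finset.card_insert_le _ _)))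
    have := ih hsT
    have := Finset.card_pos.mpr hs
    rw [Finset.card_cons]
    omega

end IsTreeSet

/-- The levels `ℓ 0 < ⋯ < ℓ (n - 1)` of `T` that a strong subtree covering `F` is to occupy;
they must contain the levels of all meets of pairs of nodes of `F`. -/
structure Blueprint (T F : Set α) (k : ℕ) where
  n : ℕ
  ℓ : ℕ → ℕ
  isTree : IsTreeSet T
  rooted : UniquelyRooted T
  balanced : BalancedOfHeight T k
  subset : F ⊆ T
  nonempty : F.Nonempty
  strictMonoOn : StrictMonoOn ℓ (Iio n)
  lt_height : ∀ i < n, ℓ i < k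
  exists_eq_lvl_meet : ∀ z ∈ F, ∀ z' ∈ F, ∃ i < n, ℓ i = lvl T (meet T z z')

open Classical in
noncomputable def extendAlong (T F : Set α) (q : ℕ) (t : α) : α :=
  if h : ∃ z ∈ F, t ≤ z ∧ q ≤ lvl T z then ancestor T h.choose q
  else if h' : ∃ u ∈ T, t ≤ u ∧ lvl T u = q then h'.choose else t

theorem extendAlong_spec {T F : Set α} {k : ℕ} (hT : IsTreeSet T) (hbal : BalancedOfHeight T k)
    (hFT : F ⊆ T) {t : α} (ht : t ∈ T) {q : ℕ} (htq : lvl T t ≤ q) (hq : q < k) :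
    extendAlong T F q t ∈ T ∧ t ≤ extendAlong T F q t ∧ lvl T (extendAlong T F q t) = q := by
  by_cases h : ∃ z ∈ F, t ≤ z ∧ q ≤ lvl T z
  · rw [extendAlong, dif_pos h]
    obtain ⟨hz, htz, hqz⟩ := h.choose_spec
    obtain ⟨ha, -, hlvl⟩ := hT.ancestor_spec (hFT hz) hqz
    exact ⟨ha, hT.le_ancestor ht (hFT hz) htz htq hqz, hlvl⟩
  · have h' := hT.exists_ge_lvl_eq hbal ht htq hq
    rw [extendAlong, dif_neg h, dif_pos h']
    exact h'.choose_spec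

namespace Blueprint

variable {T F : Set α} {k : ℕ} (B : Blueprint T F k)

theorem n_pos : 0 < B.n := by
  obtain ⟨z, hz⟩ := B.nonempty
  obtain ⟨i, hi, -⟩ := B.exists_eq_lvl_meet z hz z hz
  exact Nat.zero_lt_of_lt hi

theorem ℓ_le_ℓ {i j : ℕ} (hij : i ≤ j) (hj : j < B.n) : B.ℓ i ≤ B.ℓ j :=
  (B.strictMonoOn.le_iff_le (hij.trans_lt hj) hj).mpr hij

theorem ℓ_lt_ℓ_succ {i : ℕ} (hi : i + 1 < B.n) : B.ℓ i < B.ℓ (i + 1) :=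
  B.strictMonoOn (Nat.lt_of_succ_lt hi : i ∈ Iio B.n) hi (Nat.lt_succ_self i)

theorem exists_eq_lvl {z : α} (hz : z ∈ F) : ∃ i < B.n, B.ℓ i = lvl T z := by
  simpa only [B.isTree.meet_self B.rooted (B.subset hz)] using B.exists_eq_lvl_meet z hz z hz

theorem ℓ_zero_le_lvl_meet {z z' : α} (hz : z ∈ F) (hz' : z' ∈ F) :
    B.ℓ 0 ≤ lvl T (meet T z z') := by
  obtain ⟨j, hj, hjl⟩ := B.exists_eq_lvl_meet z hz z' hz'
  exact hjl ▸ B.ℓ_le_ℓ (Nat.zero_le j) hj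

theorem ℓ_succ_le_lvl_meet {i : ℕ} (hi : i + 1 < B.n) {z z' : α} (hz : z ∈ F) (hz' : z' ∈ F)
    (hlt : B.ℓ i < lvl T (meet T z z')) : B.ℓ (i + 1) ≤ lvl T (meet T z z') := by
  obtain ⟨j, hj, hjl⟩ := B.exists_eq_lvl_meet z hz z' hz'
  rw [← hjl] at hlt ⊢
  exact B.ℓ_le_ℓ ((B.strictMonoOn.lt_iff_lt (Nat.lt_of_succ_lt hi) hj).mp hlt) hj

noncomputable def root : α := ancestor T B.nonempty.some (B.ℓ 0)

theorem root_eq_ancestor {z : α} (hz : z ∈ F) : B.root = ancestor T z (B.ℓ 0) :=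
  B.isTree.ancestor_eq_of_le_lvl_meet B.rooted (B.subset B.nonempty.some_mem) (B.subset hz)
    (B.ℓ_zero_le_lvl_meet B.nonempty.some_mem hz)

theorem root_spec : B.root ∈ T ∧ lvl T B.root = B.ℓ 0 := by
  have hz := B.nonempty.some_mem
  have := B.isTree.ancestor_spec (B.subset hz)
    (B.isTree.meet_self B.rooted (B.subset hz) ▸ B.ℓ_zero_le_lvl_meet hz hz)
  exact ⟨this.1, this.2.2⟩

theorem extendAlong_eq_ancestor {i : ℕ} (hi : i + 1 < B.n) {t z : α} (ht : t ∈ T)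
    (hlvl : lvl T t = B.ℓ i + 1) (hz : z ∈ F) (htz : t ≤ z) (hzl : B.ℓ (i + 1) ≤ lvl T z) :
    extendAlong T F (B.ℓ (i + 1)) t = ancestor T z (B.ℓ (i + 1)) := by
  have h : ∃ z ∈ F, t ≤ z ∧ B.ℓ (i + 1) ≤ lvl T z := ⟨z, hz, htz, hzl⟩
  rw [extendAlong, dif_pos h]
  obtain ⟨hz', htz', -⟩ := h.choose_spec
  refine (B.isTree.ancestor_eq_of_le_lvl_meet B.rooted (B.subset hz) (B.subset hz') ?_).symm
  refine B.ℓ_succ_le_lvl_meet hi hz hz' ?_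
  have := B.isTree.lvl_le_lvl ht (B.isTree.meet_mem B.rooted (B.subset hz) (B.subset hz'))
    (B.isTree.le_meet B.rooted (B.subset hz) (B.subset hz') ht htz htz')
  omega

def level : ℕ → Set α
  | 0 => {B.root}
  | i + 1 => {x | ∃ s ∈ level i, ∃ t, ImmSuc T s t ∧ extendAlong T F (B.ℓ (i + 1)) t = x}

def subtree : Set α := {x | ∃ i < B.n, x ∈ B.level i}

theorem extendAlong_spec_of_immSuc {i : ℕ} (hi : i + 1 < B.n) {s t : α} (hst : ImmSuc T s t)
    (hlvl : lvl T s = B.ℓ i) :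
    lvl T t = B.ℓ i + 1 ∧ extendAlong T F (B.ℓ (i + 1)) t ∈ T ∧
      t ≤ extendAlong T F (B.ℓ (i + 1)) t ∧
        lvl T (extendAlong T F (B.ℓ (i + 1)) t) = B.ℓ (i + 1) := by
  have hlvlt : lvl T t = B.ℓ i + 1 := by
    rw [((B.isTree.immSuc_iff hst.1 hst.2.1).mp hst).2, hlvl]
  have hlt := B.ℓ_lt_ℓ_succ hi
  exact ⟨hlvlt, extendAlong_spec B.isTree B.balanced B.subset hst.2.1 (by omega)
    (B.lt_height _ hi)⟩

theorem of_mem_level {i : ℕ} (hi : i < B.n) {x : α} (hx : x ∈ B.level i) :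
    x ∈ T ∧ lvl T x = B.ℓ i := by
  induction i generalizing x with
  | zero =>
    rw [level, mem_singleton_iff] at hx
    exact hx ▸ B.root_spec
  | succ i ih =>
    obtain ⟨s, hs, t, hst, rfl⟩ := hx
    obtain ⟨-, hmem, -, hlvl⟩ :=
      B.extendAlong_spec_of_immSuc hi hst (ih (Nat.lt_of_succ_lt hi) hs).2
    exact ⟨hmem, hlvl⟩

theorem lt_of_lt_of_mem_level {i j : ℕ} (hi : i < B.n) (hj : j < B.n) {x y : α} (hx : x ∈ B.level i)
    (hy : y ∈ B.level j) (hxy : x < y) : i < j := by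
  have := B.isTree.lvl_lt_lvl (B.of_mem_level hi hx).1 (B.of_mem_level hj hy).1 hxy
  rwa [(B.of_mem_level hi hx).2, (B.of_mem_level hj hy).2, B.strictMonoOn.lt_iff_lt hi hj] at this

theorem eq_of_mem_level {i j : ℕ} (hi : i < B.n) (hj : j < B.n) {x : α} (hxi : x ∈ B.level i)
    (hxj : x ∈ B.level j) : i = j :=
  B.strictMonoOn.injOn hi hj ((B.of_mem_level hi hxi).2.symm.trans (B.of_mem_level hj hxj).2)

theorem ancestor_mem_level {i : ℕ} (hi : i < B.n) {x : α} (hx : x ∈ B.level i) {j : ℕ}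
    (hj : j ≤ i) : ancestor T x (B.ℓ j) ∈ B.level j := by
  obtain ⟨hxT, hxl⟩ := B.of_mem_level hi hx
  rcases hj.eq_or_lt with rfl | hji
  · rwa [← hxl, B.isTree.ancestor_lvl hxT]
  induction i generalizing x with
  | zero => omega
  | succ i ih =>
    obtain ⟨s, hs, t, hst, rfl⟩ := hx
    obtain ⟨hsT, hsl⟩ := B.of_mem_level (Nat.lt_of_succ_lt hi) hs
    have hsx : s ≤ extendAlong T F (B.ℓ (i + 1)) t :=
      hst.2.2.1.le.trans (B.extendAlong_spec_of_immSuc hi hst hsl).2.2.1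
    rw [← B.isTree.ancestor_eq_of_le hsT hxT hsx (hsl ▸ B.ℓ_le_ℓ (by omega) (by omega))]
    rcases (Nat.le_of_lt_succ hji).eq_or_lt with rfl | hji'
    · rwa [← hsl, B.isTree.ancestor_lvl hsT]
    · exact ih (by omega) hs (by omega) hsT hsl hji'

theorem root_le {i : ℕ} (hi : i < B.n) {x : α} (hx : x ∈ B.level i) : B.root ≤ x := by
  have h := B.ancestor_mem_level hi hx (Nat.zero_le i)
  rw [level, mem_singleton_iff] at h
  obtain ⟨hxT, hxl⟩ := B.of_mem_level hi hx
  exact h ▸ (B.isTree.ancestor_spec hxT (hxl ▸ B.ℓ_le_ℓ (Nat.zero_le i) hi)).2.1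

theorem setOf_lt_eq_image {i : ℕ} (hi : i < B.n) {x : α} (hx : x ∈ B.level i) :
    {y ∈ B.subtree | y < x} = (fun j => ancestor T x (B.ℓ j)) '' Iio i := by
  obtain ⟨hxT, hxl⟩ := B.of_mem_level hi hx
  ext y
  constructor
  · rintro ⟨⟨j, hj, hy⟩, hyx⟩
    refine ⟨j, B.lt_of_lt_of_mem_level hj hi hy hx hyx, ?_⟩
    obtain ⟨hyT, hyl⟩ := B.of_mem_level hj hy
    simp only [← hyl, ← B.isTree.eq_ancestor hxT hyT hyx.le]
  · rintro ⟨j, hji, rfl⟩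
    refine ⟨⟨j, hji.trans hi, B.ancestor_mem_level hi hx hji.le⟩, ?_⟩
    have := B.isTree.ancestor_lt_ancestor hxT (B.strictMonoOn (hji.trans hi) hi hji) hxl.ge
    rwa [← hxl, B.isTree.ancestor_lvl hxT] at this

theorem lvl_subtree {i : ℕ} (hi : i < B.n) {x : α} (hx : x ∈ B.level i) :
    lvl B.subtree x = i := by
  have hinj : InjOn (fun j => ancestor T x (B.ℓ j)) (Iio i) := fun a ha b hb hab =>
    B.eq_of_mem_level (lt_trans ha hi) (lt_trans hb hi) (B.ancestor_mem_level hi hx (le_of_lt ha))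
      (by simpa only [hab] using B.ancestor_mem_level hi hx (le_of_lt hb))
  rw [lvl, B.setOf_lt_eq_image hi hx, hinj.ncard_image, ncard_Iio_nat]

theorem ancestor_mem_level_of_mem {z : α} (hz : z ∈ F) {i : ℕ} (hi : i < B.n)
    (hiz : B.ℓ i ≤ lvl T z) : ancestor T z (B.ℓ i) ∈ B.level i := by
  have hzT := B.subset hz
  induction i with
  | zero =>
    rw [level, mem_singleton_iff, B.root_eq_ancestor hz]
  | succ i ih =>
    have hlt := B.ℓ_lt_ℓ_succ hi
    obtain ⟨hsT, -, hsl⟩ := B.isTree.ancestor_spec hzT (hlt.le.trans hiz)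
    obtain ⟨htT, htz, htl⟩ := B.isTree.ancestor_spec hzT (Nat.succ_le_of_lt (hlt.trans_le hiz))
    have hst : ImmSuc T (ancestor T z (B.ℓ i)) (ancestor T z (B.ℓ i + 1)) :=
      (B.isTree.immSuc_iff hsT htT).mpr
        ⟨B.isTree.ancestor_lt_ancestor hzT (Nat.lt_succ_self _) (by omega), by rw [htl, hsl]⟩
    exact ⟨_, ih (Nat.lt_of_succ_lt hi) (by omega), _, hst,
      B.extendAlong_eq_ancestor hi htT htl hz htz hiz⟩

theorem subset_subtree : F ⊆ B.subtree := by
  intro z hz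
  obtain ⟨i, hi, hiz⟩ := B.exists_eq_lvl hz
  refine ⟨i, hi, ?_⟩
  have := B.ancestor_mem_level_of_mem hz hi hiz.le
  rwa [hiz, B.isTree.ancestor_lvl (B.subset hz)] at this

theorem subtree_subset : B.subtree ⊆ T := fun _ ⟨_, hi, hx⟩ => (B.of_mem_level hi hx).1

theorem root_mem_subtree : B.root ∈ B.subtree := ⟨0, B.n_pos, rfl⟩

theorem isTreeSet_subtree : IsTreeSet B.subtree :=
  B.isTree.mono B.subtree_subset ⟨_, B.root_mem_subtree⟩

theorem uniquelyRooted_subtree : UniquelyRooted B.subtree :=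
  ⟨B.root, B.root_mem_subtree, fun _ ⟨_, hi, hx⟩ => B.root_le hi hx⟩

theorem levelsAligned_subtree : LevelsAligned T B.subtree := by
  rintro x ⟨i, hi, hx⟩ y ⟨j, hj, hy⟩ hxy
  rw [B.lvl_subtree hi hx, B.lvl_subtree hj hy] at hxy
  subst hxy
  rw [(B.of_mem_level hi hx).2, (B.of_mem_level hj hy).2]

theorem exists_lt_of_mem_level {i : ℕ} (hi : i + 1 < B.n) {x : α} (hx : x ∈ B.level i) :
    ∃ y ∈ B.level (i + 1), x < y := by
  obtain ⟨hxT, hxl⟩ := B.of_mem_level (Nat.lt_of_succ_lt hi) hx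
  have hlt := B.ℓ_lt_ℓ_succ hi
  obtain ⟨u, huT, hxu, hul⟩ := B.isTree.exists_ge_lvl_eq B.balanced hxT le_self_add
    (show lvl T x + 1 < k by have := B.lt_height _ hi; omega)
  have hxu' : x < u := hxu.lt_of_ne fun h => by rw [h] at hul; omega
  have hst : ImmSuc T x u := (B.isTree.immSuc_iff hxT huT).mpr ⟨hxu', hul⟩
  exact ⟨_, ⟨x, hx, u, hst, rfl⟩, hxu'.trans_le (B.extendAlong_spec_of_immSuc hi hst hxl).2.2.1⟩

theorem balancedOfHeight_subtree : BalancedOfHeight B.subtree B.n := by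
  refine B.isTreeSet_subtree.balancedOfHeight (fun x ⟨i, hi, hx⟩ => B.lvl_subtree hi hx ▸ hi) ?_
  rintro x ⟨i, hi, hx⟩ hmax
  rw [B.lvl_subtree hi hx]
  by_contra hne
  obtain ⟨y, hy, hxy⟩ := B.exists_lt_of_mem_level (by omega) hx
  exact hmax y ⟨i + 1, by omega, hy⟩ hxy

theorem succCond_subtree : SuccCond T B.subtree := by
  rintro s ⟨i, hi, hs⟩ ⟨x, ⟨j, hj, hx⟩, hsx⟩ t hst
  have hi1 : i + 1 < B.n :=
    (Nat.succ_le_of_lt (B.lt_of_lt_of_mem_level hi hj hs hx hsx)).trans_lt hj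
  obtain ⟨htl, -, htp, -⟩ := B.extendAlong_spec_of_immSuc hi1 hst (B.of_mem_level hi hs).2
  have hp : extendAlong T F (B.ℓ (i + 1)) t ∈ B.level (i + 1) := ⟨s, hs, t, hst, rfl⟩
  have hsubtree := fun q (hq : q ∈ B.subtree) => B.isTreeSet_subtree.immSuc_iff ⟨i, hi, hs⟩ hq
  refine ⟨_, ⟨(hsubtree _ ⟨i + 1, hi1, hp⟩).mpr ⟨hst.2.2.1.trans_le htp, ?_⟩, htp⟩, ?_⟩
  · rw [B.lvl_subtree hi1 hp, B.lvl_subtree hi hs]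
  rintro q ⟨hsq, htq⟩
  obtain ⟨j, hj, hq⟩ := hsq.2.1
  have hlvl := ((hsubtree q hsq.2.1).mp hsq).2
  rw [B.lvl_subtree hj hq, B.lvl_subtree hi hs] at hlvl
  subst hlvl
  obtain ⟨s', hs', t', hst', rfl⟩ := hq
  obtain ⟨ht'l, hqT, ht'q, -⟩ := B.extendAlong_spec_of_immSuc hj hst' (B.of_mem_level hi hs').2
  rw [B.isTree.eq_of_lvl_eq hst'.2.1 hst.2.1 hqT ht'q htq (ht'l.trans htl.symm)]

theorem isStrongSubtreeFin : IsStrongSubtreeFin T B.subtree B.n :=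
  ⟨B.subtree_subset, ⟨_, B.root_mem_subtree⟩, B.uniquelyRooted_subtree,
    B.balancedOfHeight_subtree, B.levelsAligned_subtree, B.succCond_subtree⟩

end Blueprint

theorem Finset.exists_strictMonoOn_enum (Λ : Finset ℕ) :
    ∃ ℓ : ℕ → ℕ, StrictMonoOn ℓ (Set.Iio Λ.card) ∧ (∀ i < Λ.card, ℓ i ∈ Λ) ∧
      ∀ q ∈ Λ, ∃ i < Λ.card, ℓ i = q := by
  have hf : (Set.ofPred (· ∈ Λ)).Finite := Λ.finite_toSet
  have hcard : hf.toFinset.card = Λ.card := by simp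
  refine ⟨Nat.nth (· ∈ Λ), hcard ▸ Nat.nth_strictMonoOn hf,
    fun i hi => Nat.nth_mem_of_lt_card hf (hcard ▸ hi), fun q hq => ?_⟩
  obtain ⟨i, hi, rfl⟩ := Nat.exists_lt_card_finite_nth_eq hf hq
  exact ⟨i, hcard ▸ hi, rfl⟩

theorem exists_isStrongSubtreeFin_of_levels {T F : Set α} {k : ℕ} (hT : IsTreeSet T)
    (hroot : UniquelyRooted T) (hbal : BalancedOfHeight T k) (hFT : F ⊆ T) (hF : F.Nonempty)
    (Λ : Finset ℕ) (hΛ : ∀ q ∈ Λ, q < k)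
    (hmeet : ∀ z ∈ F, ∀ z' ∈ F, lvl T (meet T z z') ∈ Λ) :
    ∃ S, IsStrongSubtreeFin T S Λ.card ∧ F ⊆ S := by
  obtain ⟨ℓ, hmono, hmem, hsurj⟩ := Λ.exists_strictMonoOn_enum
  let B : Blueprint T F k :=
    { n := Λ.card, ℓ := ℓ, isTree := hT, rooted := hroot, balanced := hbal, subset := hFT,
      nonempty := hF, strictMonoOn := hmono, lt_height := fun i hi => hΛ _ (hmem i hi),
      exists_eq_lvl_meet := fun z hz z' hz' => hsurj _ (hmeet z hz z' hz') }
  exact ⟨B.subtree, B.isStrongSubtreeFin, B.subset_subtree⟩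

end

theorem stmt8_general {α : Type*} [PartialOrder α] (k : ℕ)
    (T : Set α) (hT : IsTreeSet T) (hroot : UniquelyRooted T)
    (hbal : BalancedOfHeight T k)
    (F : Set α) (hFT : F ⊆ T) (hFne : F.Nonempty) (hFfin : F.Finite) :
    ∃ (S : Set α) (h : ℕ), IsStrongSubtreeFin T S h ∧ F ⊆ S ∧
      h ≤ min k (2 * F.ncard - 1) := by
  set G := hFfin.toFinset
  have hGT : ↑G ⊆ T := by simpa [G] using hFT
  set Λ := Finset.image₂ (fun x y => lvl T (meet T x y)) G G
  have hΛ : ∀ q ∈ Λ, q < k := by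
    simp only [Λ, Finset.mem_image₂]
    rintro _ ⟨x, hx, y, hy, rfl⟩
    exact hT.lvl_lt_of_balanced hbal (hT.meet_mem hroot (hGT hx) (hGT hy))
  obtain ⟨S, hS, hFS⟩ := exists_isStrongSubtreeFin_of_levels hT hroot hbal hFT hFne Λ hΛ
    fun z hz z' hz' => Finset.mem_image₂_of_mem (by simpa [G]) (by simpa [G])
  refine ⟨S, Λ.card, hS, hFS, le_min ?_ ?_⟩
  · simpa using Finset.card_le_card (fun q hq => Finset.mem_range.mpr (hΛ q hq) : Λ ⊆ .range k)
  · rw [Set.ncard_eq_toFinset_card F hFfin]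
    exact hT.card_image₂_lvl_meet_le hroot (by simpa [G]) hGT

theorem stmt8 {α : Type*} [PartialOrder α] (k : ℕ) (hk : 1 ≤ k)
    (T : Set α) (hT : IsTreeSet T) (hroot : UniquelyRooted T)
    (hbal : BalancedOfHeight T k)
    (F : Set α) (hFT : F ⊆ T) (hFne : F.Nonempty) (hFfin : F.Finite) :
    ∃ (S : Set α) (h : ℕ), IsStrongSubtreeFin T S h ∧ F ⊆ S ∧
      h ≤ min k (2 * F.ncard - 1) :=
  stmt8_general k T hT hroot hbal F hFT hFne hFfin
end
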